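/- Define a real sequence by Ḡ_1 = 1, Ḡ_2 = 4, and Ḡ_n = 3n·Ḡ_{n−1} + n(n−1)·Ḡ_{n−2} for n ≥ 3. Then for all n ≥ 1, Ḡ_n = (n! / (13 · 2^(n+1))) · ((5√13 − 13)(3 + √13)^n − (13 + 5√13)(3 − √13)^n). -/
import Mathlib


theorem stmt3 (G : ℕ → ℝ) (hG1 : G 1 = 1) (hG2 : G 2 = 4)
    (hGrec : ∀ n : ℕ, 3 ≤ n → G n = 3 * n * G (n - 1) + n * (n - 1) * G (n - 2)) :
    ∀ n : ℕ, 1 ≤ n →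
      G n = (Nat.factorial n : ℝ) / (13 * 2 ^ (n + 1)) *
        ((5 * Real.sqrt 13 - 13) * (3 + Real.sqrt 13) ^ n -
          (13 + 5 * Real.sqrt 13) * (3 - Real.sqrt 13) ^ n) := by
  have hs : Real.sqrt 13 ^ 2 = 13 := Real.sq_sqrt (by norm_num)
  set s := Real.sqrt 13 with hsdef
  intro n
  induction n using Nat.strong_induction_on with
  | _ n ih =>
    intro hn
    match n, hn with
    | 1, _ =>
      rw [hG1]
      norm_num [Nat.factorial]
      linear_combination (-5/26) * hs
    | 2, _ =>
      rw [hG2]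
      norm_num [Nat.factorial]
      linear_combination ((30 * s + 10) / 104 + 17/26 + (73 + 15 * s)/52 - (73 + 15 * s)/26) * hs
    | (m+3), _ =>
      have h1 := ih (m+2) (by omega) (by omega)
      have h2 := ih (m+1) (by omega) (by omega)
      have hrec := hGrec (m+3) (by omega)
      simp only [show m+3-1 = m+2 from rfl, show m+3-2 = m+1 from rfl] at hrec
      rw [hrec, h1, h2]
      have ha : (3 + s) ^ 2 = 6 * (3 + s) + 4 := by linear_combination hs
      have hb : (3 - s) ^ 2 = 6 * (3 - s) + 4 := by linear_combination hs
      have e3 : ((m+3).factorial : ℝ) = (m+3) * ((m+2) * (m+1).factorial) := by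
        rw [Nat.factorial_succ, Nat.factorial_succ]; push_cast; ring
      have e2 : ((m+2).factorial : ℝ) = (m+2) * (m+1).factorial := by
        rw [Nat.factorial_succ]; push_cast; ring
      have pa3 : (3 + s) ^ (m+3) = (3 + s) ^ (m+1) * (6 * (3 + s) + 4) := by
        rw [← ha]; ring
      have pb3 : (3 - s) ^ (m+3) = (3 - s) ^ (m+1) * (6 * (3 - s) + 4) := by
        rw [← hb]; ring
      have pa2 : (3 + s) ^ (m+2) = (3 + s) ^ (m+1) * (3 + s) := by ring
      have pb2 : (3 - s) ^ (m+2) = (3 - s) ^ (m+1) * (3 - s) := by ring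
      have t4 : (2:ℝ) ^ (m+3+1) = 2 ^ (m+2) * 4 := by ring
      have t3 : (2:ℝ) ^ (m+2+1) = 2 ^ (m+2) * 2 := by ring
      have t2 : (2:ℝ) ^ (m+1+1) = 2 ^ (m+2) := by ring
      rw [e3, e2, pa3, pb3, pa2, pb2, t4, t3, t2]
      have h2pos : (2:ℝ) ^ (m+2) ≠ 0 := by positivity
      push_cast
      field_simp
      ring
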